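/- Fix ν ∈ (0,1], ζ ≥ 0, and α > 0 with α ≠ ν. For λ > 0 define X(λ) = sqrt((α − ν + λν)² + 4λν²), q̂(λ) = (X(λ) + α − (1 + λ)ν)/(2λ), S(λ) = q̂(λ)/(ν + q̂(λ)), γ(λ) = νS(λ)²/α, I(λ) = 1 − 2νS(λ) + νS(λ)², and E(λ) = (I(λ) + γ(λ)ζ²)/(1 − γ(λ)). Then as λ → 0⁺, E(λ) converges to: (ν/(ν−α))·[(1−ν) + (α−ν)²/ν] + α·ζ²/(ν − α) if α < ν, and (α/(α−ν))·(1−ν) + ν·ζ²/(α − ν) if α > ν. -/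

import Mathlib

/-!
Writing `X(λ)` for the square root, `X² − (α − ν − λν)² = 4λνα`, so rationalizing the
numerator of `q̂` gives `q̂(λ) = 2να / (X + ν − α + λν)` and hence
`S(λ) = 2α / (X + α + ν + λν)`. This expression is continuous at `λ = 0`, where
`X(0) = |α − ν|`, so `S(λ) → α / max α ν`. Then `γ → min α ν / max α ν < 1` because `α ≠ ν`,
and `E` is a continuous function of `S` at the limit.
-/

/-- Conjugate order parameter of the replica saddle-point equations (with `a = 1`,
corresponding to isotropic data with `s = 1`, `c = 0`, `ω = 0`):
`q̂(λ) = (X(λ) + α − (1 + λ)ν)/(2λ)` with `X(λ) = √((α − ν + λν)² + 4λν²)`. -/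
noncomputable def qhatFun (α ν lam : ℝ) : ℝ :=
  (Real.sqrt ((α - ν + lam * ν) ^ 2 + 4 * lam * ν ^ 2) + α - (1 + lam) * ν) / (2 * lam)

/-- Reduced resolvent factor `S(λ) = q̂(λ)/(ν + q̂(λ))`. -/
noncomputable def Sfun (α ν lam : ℝ) : ℝ :=
  qhatFun α ν lam / (ν + qhatFun α ν lam)

/-- Overlap parameter `γ(λ) = νS(λ)²/α`. -/
noncomputable def gammaFun (α ν lam : ℝ) : ℝ :=
  ν * Sfun α ν lam ^ 2 / α

open Filter Topology

section
variable {α ν lam : ℝ}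

lemma sqrt_discriminant_add_sub_pos (hα : 0 < α) (hν : 0 < ν) (hlam : 0 < lam) :
    0 < √((α - ν + lam * ν) ^ 2 + 4 * lam * ν ^ 2) + ν - α + lam * ν := by
  have hX_sq := Real.sq_sqrt (by positivity : 0 ≤ (α - ν + lam * ν) ^ 2 + 4 * lam * ν ^ 2)
  have hX_nonneg := Real.sqrt_nonneg ((α - ν + lam * ν) ^ 2 + 4 * lam * ν ^ 2)
  nlinarith [mul_pos (mul_pos hlam hν) hα]

lemma qhatFun_eq_of_pos (hα : 0 < α) (hν : 0 < ν) (hlam : 0 < lam) :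
    qhatFun α ν lam =
      2 * ν * α / (√((α - ν + lam * ν) ^ 2 + 4 * lam * ν ^ 2) + ν - α + lam * ν) := by
  have hX_sq := Real.sq_sqrt (by positivity : 0 ≤ (α - ν + lam * ν) ^ 2 + 4 * lam * ν ^ 2)
  rw [qhatFun, div_eq_div_iff (by positivity) (sqrt_discriminant_add_sub_pos hα hν hlam).ne']
  linear_combination hX_sq

lemma Sfun_eq_of_pos (hα : 0 < α) (hν : 0 < ν) (hlam : 0 < lam) :
    Sfun α ν lam =
      2 * α / (√((α - ν + lam * ν) ^ 2 + 4 * lam * ν ^ 2) + α + ν + lam * ν) := by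
  have hD := sqrt_discriminant_add_sub_pos hα hν hlam
  rw [Sfun, qhatFun_eq_of_pos hα hν hlam]
  generalize √((α - ν + lam * ν) ^ 2 + 4 * lam * ν ^ 2) = X at hD ⊢
  rw [show X + α + ν + lam * ν = (X + ν - α + lam * ν) + 2 * α by ring]
  generalize X + ν - α + lam * ν = D at hD ⊢
  field_simp

lemma tendsto_Sfun_nhdsGT_zero (hα : 0 < α) (hν : 0 < ν) :
    Tendsto (Sfun α ν) (𝓝[>] 0) (𝓝 (α / max α ν)) := by
  set f : ℝ → ℝ := fun lam ↦
    2 * α / (√((α - ν + lam * ν) ^ 2 + 4 * lam * ν ^ 2) + α + ν + lam * ν)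
  have hf0 : f 0 = α / max α ν := by
    have : √((α - ν + 0 * ν) ^ 2 + 4 * 0 * ν ^ 2) = |α - ν| := by
      simp [Real.sqrt_sq_eq_abs]
    simp only [f, this]
    rcases le_total α ν with h | h
    · rw [abs_of_nonpos (by linarith), max_eq_right h, div_eq_div_iff (by linarith) hν.ne']
      ring
    · rw [abs_of_nonneg (by linarith), max_eq_left h, div_eq_div_iff (by linarith) hα.ne']
      ring
  have hf : ContinuousAt f 0 := by
    refine ContinuousAt.div (by fun_prop) (by fun_prop) ?_
    positivity
  rw [← hf0]
  refine hf.continuousWithinAt.tendsto.congr' ?_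
  filter_upwards [self_mem_nhdsWithin] with lam hlam
  exact (Sfun_eq_of_pos hα hν hlam).symm

lemma tendsto_error_of_tendsto_Sfun {l : Filter ℝ} {L : ℝ} (ζ : ℝ)
    (hS : Tendsto (Sfun α ν) l (𝓝 L)) (hL : ν * L ^ 2 / α ≠ 1) :
    Tendsto (fun lam ↦ ((1 - 2 * ν * Sfun α ν lam + ν * Sfun α ν lam ^ 2)
        + gammaFun α ν lam * ζ ^ 2) / (1 - gammaFun α ν lam)) l
      (𝓝 (((1 - 2 * ν * L + ν * L ^ 2) + ν * L ^ 2 / α * ζ ^ 2) / (1 - ν * L ^ 2 / α))) := by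
  have hγ : Tendsto (gammaFun α ν) l (𝓝 (ν * L ^ 2 / α)) :=
    (tendsto_const_nhds.mul (hS.pow 2)).div_const α
  refine Tendsto.div ?_ (tendsto_const_nhds.sub hγ) (sub_ne_zero.2 hL.symm)
  exact ((tendsto_const_nhds.sub (tendsto_const_nhds.mul hS)).add
    (tendsto_const_nhds.mul (hS.pow 2))).add (hγ.mul_const _)

end

theorem stmt_12_general (ν ζ α : ℝ) (hν : ν ∈ Set.Ioc (0 : ℝ) 1)
    (hα : 0 < α) (hαν : α ≠ ν) :
    Filter.Tendsto
      (fun lam : ℝ =>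
        ((1 - 2 * ν * Sfun α ν lam + ν * Sfun α ν lam ^ 2)
            + gammaFun α ν lam * ζ ^ 2) / (1 - gammaFun α ν lam))
      (nhdsWithin 0 (Set.Ioi 0))
      (nhds (if α < ν then
          (ν / (ν - α)) * ((1 - ν) + (α - ν) ^ 2 / ν) + α * ζ ^ 2 / (ν - α)
        else
          (α / (α - ν)) * (1 - ν) + ν * ζ ^ 2 / (α - ν))) := by
  have hν0 : 0 < ν := hν.1
  have hS := tendsto_Sfun_nhdsGT_zero hα hν0
  rcases hαν.lt_or_gt with hlt | hgt
  · rw [if_pos hlt]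
    rw [max_eq_right hlt.le] at hS
    have hL : ν * (α / ν) ^ 2 / α ≠ 1 := by
      rw [show ν * (α / ν) ^ 2 / α = α / ν by field_simp]
      exact ((div_lt_one hν0).2 hlt).ne
    convert tendsto_error_of_tendsto_Sfun ζ hS hL using 2
    have : ν - α ≠ 0 := sub_ne_zero.2 hlt.ne'
    field_simp
    ring
  · rw [if_neg hgt.not_gt]
    rw [max_eq_left hgt.le, div_self hα.ne'] at hS
    have hL : ν * 1 ^ 2 / α ≠ 1 := by
      rw [one_pow, mul_one]
      exact ((div_lt_one hα).2 hgt).ne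
    convert tendsto_error_of_tendsto_Sfun ζ hS hL using 2
    have : α - ν ≠ 0 := sub_ne_zero.2 hgt.ne'
    field_simp
    ring

/-- Ridgeless limit of the generalization error of a single feature-subsampling ridge
regressor on isotropic data, showing the double-descent peak shifted to `α = ν`. -/
theorem stmt_12 (ν ζ α : ℝ) (hν : ν ∈ Set.Ioc (0 : ℝ) 1) (hζ : 0 ≤ ζ)
    (hα : 0 < α) (hαν : α ≠ ν) :
    Filter.Tendsto
      (fun lam : ℝ =>
        ((1 - 2 * ν * Sfun α ν lam + ν * Sfun α ν lam ^ 2)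
            + gammaFun α ν lam * ζ ^ 2) / (1 - gammaFun α ν lam))
      (nhdsWithin 0 (Set.Ioi 0))
      (nhds (if α < ν then
          (ν / (ν - α)) * ((1 - ν) + (α - ν) ^ 2 / ν) + α * ζ ^ 2 / (ν - α)
        else
          (α / (α - ν)) * (1 - ν) + ν * ζ ^ 2 / (α - ν))) :=
  stmt_12_general ν ζ α hν hα hαν
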